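/- arXiv:2009.02377 — 2 statements merged into one kernel-verified Lean document; each statement's English description precedes it below -/
import Mathlib

section
/- (No-false-alarm condition via a hyper-node) Let U ⊆ V_H be a hyper-node and l ∈ E_U an operational link (l ∉ F). Suppose (1) D̃_{U,l} D̃_{U,l'} > 0 for all operational links l, l' ∈ E_U \ F, (2) if E_U ∩ F ≠ ∅ then no operational boundary edge has the same flow sign as the failed boundary edges (S_U = ∅), and (3) f_{U,g} - η|D̃_{U,l}| < 0, where f_{U,g} = Σ_{u∈U} g_{D,u} if D̃_{U,l} > 0 and Σ_{u∈U} g_{D,-u} otherwise. Then there exists z ≥ 0 satisfying the alternative system for Q_f = {l}, Q_m = ∅; consequently l is not falsely detected as failed by the LP-based algorithm. -/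
/-! Put unit weight on the `D`- or `D⁻`-rows of `U`, according to the sign `σ` of `D̃_{U,l}`, weight
`|D̃_{U,l}|` on `w`, and absorb every other column `e` by the slack `σ D̃_{U,e}` (in `x⁻` if `e ∉ F`,
with opposite sign in `x⁺` if `e ∈ F`); then the equality constraints hold identically. This slack
is nonnegative: off the boundary `E_U` the column sum `D̃_{U,e}` vanishes, since each column of `D̃`
is supported on the two endpoints of its edge with opposite entries there, and on `E_U` it is
`|D̃_{U,e}|` by conditions (1) and (2). The slacks cost nothing, so the objective is the left-hand
side of condition (3). -/

open Matrix Finset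

/-- The boundary edge set `E_U` of a hyper-node `U`: edges with exactly one endpoint in `U`. -/
def EUb {V E : Type*} [Fintype E] [DecidableEq V] (ends : E → V × V) (U : Finset V) :
    Finset E :=
  Finset.univ.filter (fun e =>
    ((ends e).1 ∈ U ∧ (ends e).2 ∉ U) ∨ ((ends e).2 ∈ U ∧ (ends e).1 ∉ U))

/-- `D̃_{U,e} = ∑_{u ∈ U} D̃_{u,e}`. -/
noncomputable def dtU {V E : Type*} (Dt : Matrix V E ℝ) (U : Finset V) (e : E) : ℝ :=
  ∑ u ∈ U, Dt u e

section Incidence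

variable {V E : Type*} [Fintype V] [DecidableEq V] {ends : E → V × V} {Dt : Matrix V E ℝ}

theorem sum_apply_eq_zero_of_skew (hD0 : ∀ u e, u ≠ (ends e).1 → u ≠ (ends e).2 → Dt u e = 0)
    (hskew : ∀ e, Dt (ends e).1 e = - Dt (ends e).2 e) (e : E) :
    ∑ u, Dt u e = 0 := by
  have hpair : ∑ u ∈ {(ends e).1, (ends e).2}, Dt u e = ∑ u, Dt u e :=
    sum_subset (subset_univ _) fun u _ hu => by
      simp only [mem_insert, mem_singleton, not_or] at hu
      exact hD0 u e hu.1 hu.2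
  rw [← hpair]
  by_cases h12 : (ends e).1 = (ends e).2
  · have := hskew e
    rw [h12] at this ⊢
    simp only [insert_eq_of_mem (mem_singleton_self _), sum_singleton]
    linarith
  · rw [sum_pair h12, hskew, neg_add_cancel]

theorem dtU_eq_zero_of_notMem_EUb [Fintype E]
    (hD0 : ∀ u e, u ≠ (ends e).1 → u ≠ (ends e).2 → Dt u e = 0)
    (hskew : ∀ e, Dt (ends e).1 e = - Dt (ends e).2 e) {U : Finset V} {e : E}
    (he : e ∉ EUb ends U) : dtU Dt U e = 0 := by
  simp only [EUb, mem_filter, mem_univ, true_and, not_or, not_and, not_not] at he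
  by_cases h1 : (ends e).1 ∈ U
  · have hout : ∀ u ∉ U, Dt u e = 0 := fun u hu =>
      hD0 u e (fun h => hu (h ▸ h1)) (fun h => hu (h ▸ he.1 h1))
    rw [dtU, sum_subset (subset_univ U) fun u _ hu => hout u hu]
    exact sum_apply_eq_zero_of_skew hD0 hskew e
  · exact sum_eq_zero fun u hu =>
      hD0 u e (fun h => h1 (h ▸ hu)) (fun h => h1 (he.2 (h ▸ hu)))

theorem sum_mul_indicator_sub_indicator (U : Finset V) (p : Prop) [Decidable p] (e : E) :
    ∑ u, Dt u e * ((if u ∈ U ∧ p then 1 else 0) - (if u ∈ U ∧ ¬p then 1 else 0)) =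
      (if p then 1 else -1) * dtU Dt U e := by
  by_cases hp : p <;> simp [hp, dtU, mul_sum, sum_ite_mem]

theorem sum_cost_indicator (U : Finset V) (p : Prop) [Decidable p] (gD gDm : V → ℝ) :
    ∑ u, (gD u * (if u ∈ U ∧ p then 1 else 0) + gDm u * (if u ∈ U ∧ ¬p then 1 else 0)) =
      if p then ∑ u ∈ U, gD u else ∑ u ∈ U, gDm u := by
  by_cases hp : p <;> simp [hp, sum_ite_mem]

end Incidence

theorem ite_pos_one_neg_one_mul_self (d : ℝ) : (if 0 < d then 1 else -1) * d = |d| := by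
  split_ifs with hd
  · rw [one_mul, abs_of_pos hd]
  · rw [neg_one_mul, abs_of_nonpos (not_lt.mp hd)]

theorem ite_pos_one_neg_one_mul_nonneg {d x : ℝ} (h : 0 < x * d) :
    0 ≤ (if 0 < d then 1 else -1) * x := by
  split_ifs with hd
  · nlinarith
  · nlinarith

theorem ite_pos_one_neg_one_mul_nonpos {d x : ℝ} (hd : d ≠ 0) (h : x * d ≤ 0) :
    (if 0 < d then 1 else -1) * x ≤ 0 := by
  split_ifs with hpos
  · nlinarith
  · have : d < 0 := lt_of_le_of_ne (not_lt.mp hpos) hd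
    nlinarith

section HyperNode

variable {V E : Type*} [Fintype V] [DecidableEq V] [Fintype E] {ends : E → V × V}
  {Dt : Matrix V E ℝ} {F : Finset E} {U : Finset V} {l : E}

theorem ite_pos_mul_dtU_nonneg_of_notMem
    (hD0 : ∀ u e, u ≠ (ends e).1 → u ≠ (ends e).2 → Dt u e = 0)
    (hskew : ∀ e, Dt (ends e).1 e = - Dt (ends e).2 e)
    (hlU : l ∈ EUb ends U) (hlF : l ∉ F)
    (hcond1 : ∀ l₁ ∈ EUb ends U, l₁ ∉ F → ∀ l₂ ∈ EUb ends U, l₂ ∉ F →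
      dtU Dt U l₁ * dtU Dt U l₂ > 0)
    {e : E} (heF : e ∉ F) :
    0 ≤ (if 0 < dtU Dt U l then 1 else -1) * dtU Dt U e := by
  by_cases heU : e ∈ EUb ends U
  · exact ite_pos_one_neg_one_mul_nonneg (hcond1 e heU heF l hlU hlF)
  · simp [dtU_eq_zero_of_notMem_EUb hD0 hskew heU]

theorem ite_pos_mul_dtU_nonpos_of_mem [DecidableEq E]
    (hD0 : ∀ u e, u ≠ (ends e).1 → u ≠ (ends e).2 → Dt u e = 0)
    (hskew : ∀ e, Dt (ends e).1 e = - Dt (ends e).2 e)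
    (hlU : l ∈ EUb ends U) (hlF : l ∉ F) (hl : dtU Dt U l ≠ 0)
    (hcond2 : (EUb ends U ∩ F).Nonempty →
      ∀ e ∈ EUb ends U, e ∉ F → ∀ l' ∈ EUb ends U ∩ F,
        ¬ (dtU Dt U l' * dtU Dt U e > 0))
    {e : E} (heF : e ∈ F) :
    (if 0 < dtU Dt U l then 1 else -1) * dtU Dt U e ≤ 0 := by
  by_cases heU : e ∈ EUb ends U
  · have he : e ∈ EUb ends U ∩ F := mem_inter.mpr ⟨heU, heF⟩
    exact ite_pos_one_neg_one_mul_nonpos hl (not_lt.mp (hcond2 ⟨e, he⟩ l hlU hlF e he))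
  · simp [dtU_eq_zero_of_notMem_EUb hD0 hskew heU]

end HyperNode

theorem stmt11_general {V E : Type*} [Fintype V] [DecidableEq V] [Fintype E] [DecidableEq E]
    (ends : E → V × V) (Dt : Matrix V E ℝ)
    (hD0 : ∀ u e, u ≠ (ends e).1 → u ≠ (ends e).2 → Dt u e = 0)
    (hskew : ∀ e, Dt (ends e).1 e = - Dt (ends e).2 e)
    (F : Finset E) (gD gDm : V → ℝ) (η : ℝ)
    (U : Finset V) (l : E) (hlU : l ∈ EUb ends U) (hlF : l ∉ F)
    (hcond1 : ∀ l₁ ∈ EUb ends U, l₁ ∉ F → ∀ l₂ ∈ EUb ends U, l₂ ∉ F →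
      dtU Dt U l₁ * dtU Dt U l₂ > 0)
    (hcond2 : (EUb ends U ∩ F).Nonempty →
      ∀ e ∈ EUb ends U, e ∉ F → ∀ l' ∈ EUb ends U ∩ F,
        ¬ (dtU Dt U l' * dtU Dt U e > 0))
    (hcond3 : (if dtU Dt U l > 0 then ∑ u ∈ U, gD u else ∑ u ∈ U, gDm u)
        - η * |dtU Dt U l| < 0) :
    ∃ (zD zDm : V → ℝ) (zxm zxp : E → ℝ) (zw zs : ℝ),
      (∀ u, 0 ≤ zD u) ∧ (∀ u, 0 ≤ zDm u) ∧ (∀ e, 0 ≤ zxm e) ∧ (∀ e, 0 ≤ zxp e) ∧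
      0 ≤ zw ∧ 0 ≤ zs ∧
      (∀ e, (∑ u, Dt u e * (zD u - zDm u)) + (zxp e - zxm e)
          - (if e = l then zw else 0) + zs = 0) ∧
      ((∑ u, (gD u * zD u + gDm u * zDm u))
        + (∑ e, (zxp e * (1 - (if e ∈ F then (1 : ℝ) else 0))
            + zxm e * (if e ∈ F then (1 : ℝ) else 0)))
        - η * zw < 0) := by
  set d := dtU Dt U l
  set σ : ℝ := if 0 < d then 1 else -1
  have hd : d ≠ 0 := mul_self_pos.mp (hcond1 l hlU hlF l hlU hlF)
  refine ⟨fun u => if u ∈ U ∧ 0 < d then 1 else 0, fun u => if u ∈ U ∧ ¬0 < d then 1 else 0,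
    fun e => if e ∉ F ∧ e ≠ l then σ * dtU Dt U e else 0,
    fun e => if e ∈ F then -(σ * dtU Dt U e) else 0, |d|, 0,
    fun u => by positivity, fun u => by positivity, fun e => ?_, fun e => ?_,
    abs_nonneg d, le_rfl, fun e => ?_, ?_⟩
  · dsimp only
    split_ifs with h
    exacts [ite_pos_mul_dtU_nonneg_of_notMem hD0 hskew hlU hlF hcond1 h.1, le_rfl]
  · dsimp only
    split_ifs with h
    exacts [neg_nonneg.mpr (ite_pos_mul_dtU_nonpos_of_mem hD0 hskew hlU hlF hd hcond2 h), le_rfl]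
  · dsimp only
    rw [sum_mul_indicator_sub_indicator]
    change σ * dtU Dt U e + _ - _ + 0 = 0
    by_cases hel : e = l
    · rw [hel, if_neg hlF, if_neg (fun h => h.2 rfl), if_pos rfl]
      linarith [ite_pos_one_neg_one_mul_self d]
    · by_cases heF : e ∈ F <;> simp [heF, hel]
  · have hslack : ∀ e, (if e ∈ F then -(σ * dtU Dt U e) else 0) *
          (1 - if e ∈ F then (1 : ℝ) else 0) +
        (if e ∉ F ∧ e ≠ l then σ * dtU Dt U e else 0) * (if e ∈ F then 1 else 0) = 0 :=
      fun e => by by_cases heF : e ∈ F <;> simp [heF]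
    dsimp only
    rw [sum_cost_indicator, sum_congr rfl fun e _ => hslack e, sum_const_zero, add_zero]
    exact hcond3

/-- No-false-alarm condition via a hyper-node: under conditions (1)-(3) there is a
nonnegative solution of the alternative system for `Q_f = {l}`, `Q_m = ∅`. -/
theorem stmt11 {V E : Type*} [Fintype V] [DecidableEq V] [Fintype E] [DecidableEq E]
    (ends : E → V × V) (Dt : Matrix V E ℝ)
    (hD0 : ∀ u e, u ≠ (ends e).1 → u ≠ (ends e).2 → Dt u e = 0)
    (hskew : ∀ e, Dt (ends e).1 e = - Dt (ends e).2 e)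
    (F : Finset E) (gD gDm : V → ℝ) (η : ℝ) (hη : 0 < η ∧ η < 1)
    (U : Finset V) (l : E) (hlU : l ∈ EUb ends U) (hlF : l ∉ F)
    (hcond1 : ∀ l₁ ∈ EUb ends U, l₁ ∉ F → ∀ l₂ ∈ EUb ends U, l₂ ∉ F →
      dtU Dt U l₁ * dtU Dt U l₂ > 0)
    (hcond2 : (EUb ends U ∩ F).Nonempty →
      ∀ e ∈ EUb ends U, e ∉ F → ∀ l' ∈ EUb ends U ∩ F,
        ¬ (dtU Dt U l' * dtU Dt U e > 0))
    (hcond3 : (if dtU Dt U l > 0 then ∑ u ∈ U, gD u else ∑ u ∈ U, gDm u)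
        - η * |dtU Dt U l| < 0) :
    ∃ (zD zDm : V → ℝ) (zxm zxp : E → ℝ) (zw zs : ℝ),
      (∀ u, 0 ≤ zD u) ∧ (∀ u, 0 ≤ zDm u) ∧ (∀ e, 0 ≤ zxm e) ∧ (∀ e, 0 ≤ zxp e) ∧
      0 ≤ zw ∧ 0 ≤ zs ∧
      (∀ e, (∑ u, Dt u e * (zD u - zDm u)) + (zxp e - zxm e)
          - (if e = l then zw else 0) + zs = 0) ∧
      ((∑ u, (gD u * zD u + gDm u * zDm u))
        + (∑ e, (zxp e * (1 - (if e ∈ F then (1 : ℝ) else 0))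
            + zxm e * (if e ∈ F then (1 : ℝ) else 0)))
        - η * zw < 0) :=
  stmt11_general ends Dt hD0 hskew F gD gDm η U l hlU hlF hcond1 hcond2 hcond3
end

section
/- (Fail-cover set no-false-alarm condition) In the setting of the previous statement (fail-cover hyper-node set T with f_{T,1} ≥ f_{T,0} and F covered by the boundary edges of T), let e' ∉ F be an operational link. If f_{T,g} - η(f_{T,1} + |D̃_{T,e'}|) < 0 when e' ∉ S_T, or f_{T,g} - η(f_{T,1} - |D̃_{T,e'}|) < 0 when e' ∈ S_T, then there exists z ≥ 0 solving the alternative system for Q_f = {e'}, Q_m = ∅ (with z_* = f_{T,1}); hence e' is not falsely detected as failed by the LP-based algorithm. -/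
open Matrix Finset

/-- `f_{U,1} = min_{e ∈ E_U ∩ F} |D̃_{U,e}|`. -/
noncomputable def fU1 {V E : Type*} [Fintype E] [DecidableEq V] [DecidableEq E]
    (ends : E → V × V) (Dt : Matrix V E ℝ) (F : Finset E) (U : Finset V) : ℝ :=
  sInf ((fun e => |dtU Dt U e|) '' ↑(EUb ends U ∩ F))

/-- `R_U = (max_{U' ∈ T} f_{U',1}) / f_{U,1}`. -/
noncomputable def RT {V E : Type*} [Fintype E] [DecidableEq V] [DecidableEq E]
    (ends : E → V × V) (Dt : Matrix V E ℝ) (F : Finset E)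
    (Tn Tp : Finset (Finset V)) (U : Finset V) : ℝ :=
  sSup ((fun U' => fU1 ends Dt F U') '' ↑(Tn ∪ Tp)) / fU1 ends Dt F U

/-- `D̃_{T,e} = ∑_{U ∈ T_n} R_U D̃_{U,e} - ∑_{U ∈ T_p} R_U D̃_{U,e}`. -/
noncomputable def dtT {V E : Type*} [Fintype E] [DecidableEq V] [DecidableEq E]
    (ends : E → V × V) (Dt : Matrix V E ℝ) (F : Finset E)
    (Tn Tp : Finset (Finset V)) (e : E) : ℝ :=
  ∑ U ∈ Tn, RT ends Dt F Tn Tp U * dtU Dt U e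
    - ∑ U ∈ Tp, RT ends Dt F Tn Tp U * dtU Dt U e

/-- `S_T = {e' ∉ F : ∃ e ∈ F, D̃_{T,e'} D̃_{T,e} > 0}`. -/
def STset {V E : Type*} [Fintype E] [DecidableEq V] [DecidableEq E]
    (ends : E → V × V) (Dt : Matrix V E ℝ) (F : Finset E)
    (Tn Tp : Finset (Finset V)) : Set E :=
  {e' | e' ∉ F ∧ ∃ e ∈ F, dtT ends Dt F Tn Tp e' * dtT ends Dt F Tn Tp e > 0}

/-- `f_{T,0} = max_{e' ∈ S_T} |D̃_{T,e'}|` (equal to `0` if `S_T = ∅`). -/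
noncomputable def fT0 {V E : Type*} [Fintype E] [DecidableEq V] [DecidableEq E]
    (ends : E → V × V) (Dt : Matrix V E ℝ) (F : Finset E)
    (Tn Tp : Finset (Finset V)) : ℝ :=
  sSup ((fun e' => |dtT ends Dt F Tn Tp e'|) '' STset ends Dt F Tn Tp)

/-- `f_{T,1} = min_{e ∈ F} |D̃_{T,e}|`. -/
noncomputable def fT1 {V E : Type*} [Fintype E] [DecidableEq V] [DecidableEq E]
    (ends : E → V × V) (Dt : Matrix V E ℝ) (F : Finset E)
    (Tn Tp : Finset (Finset V)) : ℝ :=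
  sInf ((fun e => |dtT ends Dt F Tn Tp e|) '' ↑F)

/-- `f_{U,g}`: sum of `g_{D,u}` over `U` if some failed boundary edge has
`D̃_{U,l} < 0`, else the sum of `g_{D,-u}`. -/
noncomputable def fUg {V E : Type*} [Fintype E] [DecidableEq V] [DecidableEq E]
    (ends : E → V × V) (Dt : Matrix V E ℝ) (F : Finset E)
    (gD gDm : V → ℝ) (U : Finset V) : ℝ :=
  if ((EUb ends U ∩ F).filter (fun l => dtU Dt U l < 0)).Nonempty then
    ∑ u ∈ U, gD u
  else ∑ u ∈ U, gDm u

/-- `f_{T,g} = ∑_{U ∈ T} R_U f_{U,g}`. -/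
noncomputable def fTg {V E : Type*} [Fintype E] [DecidableEq V] [DecidableEq E]
    (ends : E → V × V) (Dt : Matrix V E ℝ) (F : Finset E)
    (gD gDm : V → ℝ) (Tn Tp : Finset (Finset V)) : ℝ :=
  ∑ U ∈ Tn ∪ Tp, RT ends Dt F Tn Tp U * fUg ends Dt F gD gDm U

/-!
Put `d = D̃_{T,·}` and `c = f_{T,1}`. The weights `z_{D,±v}` make the `D̃`-part of the `e`-th
constraint equal to `d e`, so with the shift `z_* = c` the slacks must absorb `d e + c`. On `F`,
`d e = -|d e| ≤ -c`, and off `F`, `d e ≥ -c`: on `S_T` because `|d e| ≤ f_{T,0} ≤ c`, and off `S_T`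
because there `d e ≥ 0`. Hence the slacks are nonnegative, and they sit exactly where the cost does
not charge them. The cost of the `D`-part is `f_{T,g}`, and `z_w = d e' + c` equals `c + |d e'|`
or `c - |d e'|` according as `e' ∉ S_T` or `e' ∈ S_T`.
-/

theorem sum_mul_sub_sum_mul_neg {ι : Type*} [DecidableEq ι] {Tn Tp : Finset ι} {w a : ι → ℝ}
    (hw : ∀ i ∈ Tn ∪ Tp, 0 < w i) (hn : ∀ i ∈ Tn, a i ≤ 0) (hp : ∀ i ∈ Tp, 0 ≤ a i)
    {i₀ : ι} (hi₀ : i₀ ∈ Tn ∪ Tp) (ha : a i₀ ≠ 0) :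
    ∑ i ∈ Tn, w i * a i - ∑ i ∈ Tp, w i * a i < 0 := by
  have hwn : ∀ i ∈ Tn, 0 < w i := fun i hi => hw i (mem_union_left _ hi)
  have hwp : ∀ i ∈ Tp, 0 < w i := fun i hi => hw i (mem_union_right _ hi)
  have hN : ∑ i ∈ Tn, w i * a i ≤ 0 :=
    sum_nonpos fun i hi => mul_nonpos_of_nonneg_of_nonpos (hwn i hi).le (hn i hi)
  have hP : 0 ≤ ∑ i ∈ Tp, w i * a i :=
    sum_nonneg fun i hi => mul_nonneg (hwp i hi).le (hp i hi)
  rcases mem_union.1 hi₀ with h | h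
  · have := sum_neg' (fun i hi => mul_nonpos_of_nonneg_of_nonpos (hwn i hi).le (hn i hi))
      ⟨i₀, h, mul_neg_of_pos_of_neg (hwn i₀ h) ((hn i₀ h).lt_of_ne ha)⟩
    linarith
  · have := sum_pos' (fun i hi => mul_nonneg (hwp i hi).le (hp i hi))
      ⟨i₀, h, mul_pos (hwp i₀ h) ((hp i₀ h).lt_of_ne' ha)⟩
    linarith

/-- The witness coordinates `z_{D,·}` (for `T = T_n`) and `z_{D,-·}` (for `T = T_p`). -/
def memberWeight {V : Type*} [DecidableEq V] (R : Finset V → ℝ) (T : Finset (Finset V))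
    (v : V) : ℝ :=
  ∑ U ∈ T, if v ∈ U then R U else 0

section memberWeight

variable {V : Type*} [DecidableEq V] {R : Finset V → ℝ} {T : Finset (Finset V)}

theorem memberWeight_nonneg (hR : ∀ U ∈ T, 0 ≤ R U) (v : V) : 0 ≤ memberWeight R T v :=
  sum_nonneg fun U hU => by split_ifs <;> simp [hR U hU]

theorem sum_mul_memberWeight [Fintype V] (h : V → ℝ) :
    ∑ v, h v * memberWeight R T v = ∑ U ∈ T, R U * ∑ v ∈ U, h v := by
  simp_rw [memberWeight, mul_sum, mul_ite, mul_zero]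
  rw [sum_comm]
  refine sum_congr rfl fun U _ => ?_
  rw [sum_ite_mem, univ_inter]
  exact sum_congr rfl fun v _ => mul_comm _ _

end memberWeight

section slack

variable {E : Type*} [DecidableEq E] {F : Finset E} {e' : E} {d : E → ℝ} {c : ℝ}

/-- The witness coordinates `z_{x+,·}`. -/
def slackPos (F : Finset E) (d : E → ℝ) (c : ℝ) (e : E) : ℝ :=
  if e ∈ F then |d e| - c else 0

/-- The witness coordinates `z_{x-,·}`. -/
def slackNeg (F : Finset E) (e' : E) (d : E → ℝ) (c : ℝ) (e : E) : ℝ :=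
  if e ∈ F ∨ e = e' then 0 else d e + c

theorem slackPos_nonneg (h : ∀ e ∈ F, c ≤ |d e|) (e : E) : 0 ≤ slackPos F d c e := by
  unfold slackPos
  split_ifs with he
  · exact sub_nonneg.2 (h e he)
  · exact le_rfl

theorem slackNeg_nonneg (h : ∀ e ∉ F, -c ≤ d e) (e : E) : 0 ≤ slackNeg F e' d c e := by
  unfold slackNeg
  split_ifs with he
  · exact le_rfl
  · linarith [h e (not_or.1 he).1]

theorem add_slack_sub_add_eq_zero (hF : ∀ e ∈ F, d e < 0) (he' : e' ∉ F) (e : E) :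
    d e + (slackPos F d c e - slackNeg F e' d c e) - (if e = e' then d e' + c else 0) + c = 0 := by
  unfold slackPos slackNeg
  by_cases he : e ∈ F
  · rw [if_pos he, if_pos (Or.inl he), if_neg (ne_of_mem_of_not_mem he he'), abs_of_neg (hF e he)]
    ring
  · by_cases hee' : e = e'
    · rw [if_neg he, if_pos (Or.inr hee'), if_pos hee', hee']
      ring
    · rw [if_neg he, if_neg (not_or.2 ⟨he, hee'⟩), if_neg hee']
      ring

theorem sum_slack_cost_eq_zero [Fintype E] :
    ∑ e, (slackPos F d c e * (1 - if e ∈ F then (1 : ℝ) else 0)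
      + slackNeg F e' d c e * if e ∈ F then (1 : ℝ) else 0) = 0 :=
  sum_eq_zero fun e _ => by by_cases he : e ∈ F <;> simp [slackPos, slackNeg, he]

end slack

def HasCoherentFailBoundary {V E : Type*} [Fintype E] [DecidableEq V] [DecidableEq E]
    (ends : E → V × V) (Dt : Matrix V E ℝ) (F : Finset E) (T : Finset (Finset V)) : Prop :=
  ∀ U ∈ T, (EUb ends U ∩ F).Nonempty ∧
    ∀ e ∈ EUb ends U ∩ F, ∀ l ∈ EUb ends U ∩ F, dtU Dt U e * dtU Dt U l > 0

section FailCover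

variable {V E : Type*} [Fintype E] [DecidableEq V] [DecidableEq E]
  {ends : E → V × V} {Dt : Matrix V E ℝ} {F : Finset E} {Tn Tp : Finset (Finset V)}

theorem HasCoherentFailBoundary.dtU_ne_zero {T : Finset (Finset V)}
    (hT : HasCoherentFailBoundary ends Dt F T) {U : Finset V} (hU : U ∈ T) {e : E}
    (he : e ∈ EUb ends U ∩ F) : dtU Dt U e ≠ 0 :=
  mul_self_pos.1 ((hT U hU).2 e he e he)

theorem HasCoherentFailBoundary.fU1_pos {T : Finset (Finset V)}
    (hT : HasCoherentFailBoundary ends Dt F T) {U : Finset V} (hU : U ∈ T) :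
    0 < fU1 ends Dt F U :=
  ((EUb ends U ∩ F).finite_toSet.image _).lt_csInf_iff ((hT U hU).1.to_set.image _) |>.2 <| by
    rintro _ ⟨e, he, rfl⟩
    exact abs_pos.2 (hT.dtU_ne_zero hU he)

theorem HasCoherentFailBoundary.RT_pos (hT : HasCoherentFailBoundary ends Dt F (Tn ∪ Tp))
    {U : Finset V} (hU : U ∈ Tn ∪ Tp) : 0 < RT ends Dt F Tn Tp U := by
  have hle : fU1 ends Dt F U ≤ sSup ((fun U' => fU1 ends Dt F U') '' ↑(Tn ∪ Tp)) :=
    le_csSup ((Tn ∪ Tp).finite_toSet.image _).bddAbove (Set.mem_image_of_mem _ hU)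
  exact div_pos ((hT.fU1_pos hU).trans_le hle) (hT.fU1_pos hU)

theorem HasCoherentFailBoundary.dtT_neg (hT : HasCoherentFailBoundary ends Dt F (Tn ∪ Tp))
    (hTn : ∀ U ∈ Tn, ∀ e ∈ F, dtU Dt U e ≤ 0) (hTp : ∀ U ∈ Tp, ∀ e ∈ F, 0 ≤ dtU Dt U e)
    (hcover : ∀ e ∈ F, ∃ U ∈ Tn ∪ Tp, e ∈ EUb ends U) {e : E} (he : e ∈ F) :
    dtT ends Dt F Tn Tp e < 0 := by
  obtain ⟨U, hU, heU⟩ := hcover e he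
  exact sum_mul_sub_sum_mul_neg (fun U hU => hT.RT_pos hU) (fun U hU => hTn U hU e he)
    (fun U hU => hTp U hU e he) hU (hT.dtU_ne_zero hU (mem_inter.2 ⟨heU, he⟩))

theorem mem_STset_iff (hF : ∀ e ∈ F, dtT ends Dt F Tn Tp e < 0) (hFne : F.Nonempty)
    {l : E} (hl : l ∉ F) : l ∈ STset ends Dt F Tn Tp ↔ dtT ends Dt F Tn Tp l < 0 := by
  constructor
  · rintro ⟨-, e, he, hpos⟩
    exact neg_of_mul_pos_left hpos (hF e he).le
  · intro hneg
    obtain ⟨e, he⟩ := hFne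
    exact ⟨hl, e, he, mul_pos_of_neg_of_neg hneg (hF e he)⟩

theorem fT1_nonneg : 0 ≤ fT1 ends Dt F Tn Tp :=
  Real.sInf_nonneg <| by
    rintro _ ⟨e, -, rfl⟩
    exact abs_nonneg _

theorem fT1_le_abs_dtT {e : E} (he : e ∈ F) : fT1 ends Dt F Tn Tp ≤ |dtT ends Dt F Tn Tp e| :=
  csInf_le (F.finite_toSet.image _).bddBelow (Set.mem_image_of_mem _ he)

theorem abs_dtT_le_fT0 {l : E} (hl : l ∈ STset ends Dt F Tn Tp) :
    |dtT ends Dt F Tn Tp l| ≤ fT0 ends Dt F Tn Tp :=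
  le_csSup ((Set.toFinite _).image _).bddAbove (Set.mem_image_of_mem _ hl)

theorem neg_fT1_le_dtT (hF : ∀ e ∈ F, dtT ends Dt F Tn Tp e < 0) (hFne : F.Nonempty)
    (hf10 : fT1 ends Dt F Tn Tp ≥ fT0 ends Dt F Tn Tp) {l : E} (hl : l ∉ F) :
    -fT1 ends Dt F Tn Tp ≤ dtT ends Dt F Tn Tp l := by
  by_cases hS : l ∈ STset ends Dt F Tn Tp
  · linarith [abs_dtT_le_fT0 hS, neg_abs_le (dtT ends Dt F Tn Tp l)]
  · have h0 : 0 ≤ fT1 ends Dt F Tn Tp := fT1_nonneg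
    linarith [(mem_STset_iff hF hFne hl).not.1 hS]

theorem sum_mul_memberWeight_sub_eq_dtT [Fintype V] (e : E) :
    ∑ u, Dt u e * (memberWeight (RT ends Dt F Tn Tp) Tn u
      - memberWeight (RT ends Dt F Tn Tp) Tp u) = dtT ends Dt F Tn Tp e := by
  simp_rw [mul_sub, sum_sub_distrib, sum_mul_memberWeight (fun u => Dt u e)]
  rfl

theorem HasCoherentFailBoundary.sum_cost_memberWeight_eq_fTg [Fintype V] {gD gDm : V → ℝ}
    (hT : HasCoherentFailBoundary ends Dt F (Tn ∪ Tp)) (hdisj : Disjoint Tn Tp)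
    (hTn : ∀ U ∈ Tn, ∀ e ∈ F, dtU Dt U e ≤ 0) (hTp : ∀ U ∈ Tp, ∀ e ∈ F, 0 ≤ dtU Dt U e) :
    ∑ u, (gD u * memberWeight (RT ends Dt F Tn Tp) Tn u
      + gDm u * memberWeight (RT ends Dt F Tn Tp) Tp u) = fTg ends Dt F gD gDm Tn Tp := by
  rw [sum_add_distrib, sum_mul_memberWeight, sum_mul_memberWeight, fTg, sum_union hdisj]
  congr 1
  · refine sum_congr rfl fun U hU => ?_
    have hU' := mem_union_left Tp hU
    obtain ⟨l, hl⟩ := (hT U hU').1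
    have hneg : dtU Dt U l < 0 :=
      (hTn U hU l (mem_inter.1 hl).2).lt_of_ne (hT.dtU_ne_zero hU' hl)
    rw [fUg, if_pos ⟨l, mem_filter.2 ⟨hl, hneg⟩⟩]
  · refine sum_congr rfl fun U hU => ?_
    rw [fUg, if_neg]
    rintro ⟨l, hl⟩
    obtain ⟨hl, hneg⟩ := mem_filter.1 hl
    exact (hTp U hU l (mem_inter.1 hl).2).not_gt hneg

theorem fTg_sub_lt_zero {gD gDm : V → ℝ} {η : ℝ} (hF : ∀ e ∈ F, dtT ends Dt F Tn Tp e < 0)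
    (hFne : F.Nonempty) {e' : E} (he'F : e' ∉ F)
    (hnotmem : e' ∉ STset ends Dt F Tn Tp →
      fTg ends Dt F gD gDm Tn Tp
        - η * (fT1 ends Dt F Tn Tp + |dtT ends Dt F Tn Tp e'|) < 0)
    (hmem : e' ∈ STset ends Dt F Tn Tp →
      fTg ends Dt F gD gDm Tn Tp
        - η * (fT1 ends Dt F Tn Tp - |dtT ends Dt F Tn Tp e'|) < 0) :
    fTg ends Dt F gD gDm Tn Tp - η * (dtT ends Dt F Tn Tp e' + fT1 ends Dt F Tn Tp) < 0 := by
  by_cases hS : e' ∈ STset ends Dt F Tn Tp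
  · have := hmem hS
    rw [abs_of_neg ((mem_STset_iff hF hFne he'F).1 hS)] at this
    linarith
  · have := hnotmem hS
    rw [abs_of_nonneg (not_lt.1 ((mem_STset_iff hF hFne he'F).not.1 hS))] at this
    linarith

end FailCover

theorem stmt13_general {V E : Type*} [Fintype V] [DecidableEq V] [Fintype E] [DecidableEq E]
    (ends : E → V × V) (Dt : Matrix V E ℝ)
    (F : Finset E) (hFne : F.Nonempty) (gD gDm : V → ℝ) (η : ℝ)
    (Tn Tp : Finset (Finset V)) (hdisj : Disjoint Tn Tp)
    (hfailcover : ∀ U ∈ Tn ∪ Tp, (EUb ends U ∩ F).Nonempty ∧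
      ∀ e ∈ EUb ends U ∩ F, ∀ l ∈ EUb ends U ∩ F, dtU Dt U e * dtU Dt U l > 0)
    (hTn : ∀ U ∈ Tn, ∀ e ∈ F, dtU Dt U e ≤ 0)
    (hTp : ∀ U ∈ Tp, ∀ e ∈ F, 0 ≤ dtU Dt U e)
    (hcond_i : fT1 ends Dt F Tn Tp ≥ fT0 ends Dt F Tn Tp)
    (hcond_ii : ∀ e ∈ F, ∃ U ∈ Tn ∪ Tp, e ∈ EUb ends U)
    (e' : E) (he'F : e' ∉ F)
    (hcond3a : e' ∉ STset ends Dt F Tn Tp →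
      fTg ends Dt F gD gDm Tn Tp
        - η * (fT1 ends Dt F Tn Tp + |dtT ends Dt F Tn Tp e'|) < 0)
    (hcond3b : e' ∈ STset ends Dt F Tn Tp →
      fTg ends Dt F gD gDm Tn Tp
        - η * (fT1 ends Dt F Tn Tp - |dtT ends Dt F Tn Tp e'|) < 0) :
    ∃ (zD zDm : V → ℝ) (zxm zxp : E → ℝ) (zw zs : ℝ),
      (∀ u, 0 ≤ zD u) ∧ (∀ u, 0 ≤ zDm u) ∧ (∀ e, 0 ≤ zxm e) ∧ (∀ e, 0 ≤ zxp e) ∧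
      0 ≤ zw ∧ 0 ≤ zs ∧
      (∀ e, (∑ u, Dt u e * (zD u - zDm u)) + (zxp e - zxm e)
          - (if e = e' then zw else 0) + zs = 0) ∧
      ((∑ u, (gD u * zD u + gDm u * zDm u))
        + (∑ e, (zxp e * (1 - (if e ∈ F then (1 : ℝ) else 0))
            + zxm e * (if e ∈ F then (1 : ℝ) else 0)))
        - η * zw < 0) := by
  have hT : HasCoherentFailBoundary ends Dt F (Tn ∪ Tp) := hfailcover
  have hF : ∀ e ∈ F, dtT ends Dt F Tn Tp e < 0 := fun _ => hT.dtT_neg hTn hTp hcond_ii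
  have hlow : ∀ l ∉ F, -fT1 ends Dt F Tn Tp ≤ dtT ends Dt F Tn Tp l :=
    fun _ => neg_fT1_le_dtT hF hFne hcond_i
  refine ⟨memberWeight (RT ends Dt F Tn Tp) Tn, memberWeight (RT ends Dt F Tn Tp) Tp,
    slackNeg F e' (dtT ends Dt F Tn Tp) (fT1 ends Dt F Tn Tp),
    slackPos F (dtT ends Dt F Tn Tp) (fT1 ends Dt F Tn Tp),
    dtT ends Dt F Tn Tp e' + fT1 ends Dt F Tn Tp, fT1 ends Dt F Tn Tp,
    memberWeight_nonneg fun U hU => (hT.RT_pos (mem_union_left _ hU)).le,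
    memberWeight_nonneg fun U hU => (hT.RT_pos (mem_union_right _ hU)).le,
    slackNeg_nonneg hlow, slackPos_nonneg fun _ => fT1_le_abs_dtT,
    by linarith [hlow e' he'F], fT1_nonneg, fun e => ?_, ?_⟩
  · rw [sum_mul_memberWeight_sub_eq_dtT]
    exact add_slack_sub_add_eq_zero hF he'F e
  · rw [hT.sum_cost_memberWeight_eq_fTg hdisj hTn hTp, sum_slack_cost_eq_zero, add_zero]
    exact fTg_sub_lt_zero hF hFne he'F hcond3a hcond3b

/-- Fail-cover set no-false-alarm condition. -/
theorem stmt13 {V E : Type*} [Fintype V] [DecidableEq V] [Fintype E] [DecidableEq E]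
    (ends : E → V × V) (Dt : Matrix V E ℝ)
    (hD0 : ∀ u e, u ≠ (ends e).1 → u ≠ (ends e).2 → Dt u e = 0)
    (hskew : ∀ e, Dt (ends e).1 e = - Dt (ends e).2 e)
    (F : Finset E) (hFne : F.Nonempty) (gD gDm : V → ℝ) (η : ℝ) (hη : 0 < η ∧ η < 1)
    (Tn Tp : Finset (Finset V)) (hdisj : Disjoint Tn Tp)
    (hfailcover : ∀ U ∈ Tn ∪ Tp, (EUb ends U ∩ F).Nonempty ∧
      ∀ e ∈ EUb ends U ∩ F, ∀ l ∈ EUb ends U ∩ F, dtU Dt U e * dtU Dt U l > 0)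
    (hTn : ∀ U ∈ Tn, ∀ e ∈ F, dtU Dt U e ≤ 0)
    (hTp : ∀ U ∈ Tp, ∀ e ∈ F, 0 ≤ dtU Dt U e)
    (hcond_i : fT1 ends Dt F Tn Tp ≥ fT0 ends Dt F Tn Tp)
    (hcond_ii : ∀ e ∈ F, ∃ U ∈ Tn ∪ Tp, e ∈ EUb ends U)
    (e' : E) (he'F : e' ∉ F)
    (hcond3a : e' ∉ STset ends Dt F Tn Tp →
      fTg ends Dt F gD gDm Tn Tp
        - η * (fT1 ends Dt F Tn Tp + |dtT ends Dt F Tn Tp e'|) < 0)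
    (hcond3b : e' ∈ STset ends Dt F Tn Tp →
      fTg ends Dt F gD gDm Tn Tp
        - η * (fT1 ends Dt F Tn Tp - |dtT ends Dt F Tn Tp e'|) < 0) :
    ∃ (zD zDm : V → ℝ) (zxm zxp : E → ℝ) (zw zs : ℝ),
      (∀ u, 0 ≤ zD u) ∧ (∀ u, 0 ≤ zDm u) ∧ (∀ e, 0 ≤ zxm e) ∧ (∀ e, 0 ≤ zxp e) ∧
      0 ≤ zw ∧ 0 ≤ zs ∧
      (∀ e, (∑ u, Dt u e * (zD u - zDm u)) + (zxp e - zxm e)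
          - (if e = e' then zw else 0) + zs = 0) ∧
      ((∑ u, (gD u * zD u + gDm u * zDm u))
        + (∑ e, (zxp e * (1 - (if e ∈ F then (1 : ℝ) else 0))
            + zxm e * (if e ∈ F then (1 : ℝ) else 0)))
        - η * zw < 0) :=
  stmt13_general ends Dt F hFne gD gDm η Tn Tp hdisj hfailcover hTn hTp hcond_i hcond_ii e' he'F
    hcond3a hcond3b
end
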